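/- Let h : ℕ → ℕ be a sequence of positive integers and define η(h) : ℕ → ℕ by η(h)(n) = Z(h(n), h(n+1)); let η^{(m)} denote the m-fold iterate. Let Φ act on sequences f : ℕ → ℕ by Φ(f)(n) = |f(n+1) − f(n)|, with Φ^{(m)} its m-fold iterate. Then for every prime p, every m ≥ 0 and every n ≥ 0, ν_p(η^{(m)}(h)(n)) = Φ^{(m)}(ν_p ∘ h)(n); that is, taking p-adic valuations intertwines the Z-iteration with the iterated absolute difference operator. -/

import Mathlib

/-- `Z a b = a*b / gcd(a,b)^2`. -/
def Zfun (a b : ℕ) : ℕ := a * b / Nat.gcd a b ^ 2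

/-- The `Z`-evolution operator on sequences of positive integers. -/
def eta (h : ℕ → ℕ) : ℕ → ℕ := fun n => Zfun (h n) (h (n + 1))

/-- The absolute-difference operator on sequences of naturals. -/
def Phi (f : ℕ → ℕ) : ℕ → ℕ := fun n => Nat.dist (f (n + 1)) (f n)

/-!
Since `ν_p (a * b / gcd a b ^ 2) = ν_p a + ν_p b - 2 * min (ν_p a) (ν_p b) = |ν_p a - ν_p b|`,
one step of `η` acts on `p`-adic valuations as one step of `Φ`. As `η` keeps sequences positive,
the statement follows by induction on the number of iterations.
-/

lemma Nat.gcd_sq_dvd_mul (a b : ℕ) : Nat.gcd a b ^ 2 ∣ a * b :=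
  sq (Nat.gcd a b) ▸ mul_dvd_mul (Nat.gcd_dvd_left a b) (Nat.gcd_dvd_right a b)

lemma Zfun_pos {a b : ℕ} (ha : 0 < a) (hb : 0 < b) : 0 < Zfun a b :=
  Nat.div_pos (Nat.le_of_dvd (Nat.mul_pos ha hb) (Nat.gcd_sq_dvd_mul a b))
    (pow_pos (Nat.gcd_pos_of_pos_left b ha) 2)

lemma factorization_Zfun {a b : ℕ} (ha : 0 < a) (hb : 0 < b) (p : ℕ) :
    (Zfun a b).factorization p = Nat.dist (a.factorization p) (b.factorization p) := by
  rw [Zfun, Nat.factorization_div (Nat.gcd_sq_dvd_mul a b), Finsupp.coe_tsub, Pi.sub_apply,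
    Nat.factorization_mul ha.ne' hb.ne', Nat.factorization_pow, Nat.factorization_gcd ha.ne' hb.ne']
  simp only [Finsupp.coe_add, Pi.add_apply, Finsupp.smul_apply, Finsupp.inf_apply, smul_eq_mul,
    Nat.dist]
  omega

lemma eta_pos {h : ℕ → ℕ} (hpos : ∀ n, 0 < h n) (n : ℕ) : 0 < eta h n :=
  Zfun_pos (hpos n) (hpos (n + 1))

lemma factorization_eta {h : ℕ → ℕ} (hpos : ∀ n, 0 < h n) (p : ℕ) :
    (fun n => (eta h n).factorization p) = Phi (fun n => (h n).factorization p) := by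
  funext n
  rw [eta, factorization_Zfun (hpos n) (hpos (n + 1)), Phi, Nat.dist_comm]

theorem valuation_intertwines (h : ℕ → ℕ) (hpos : ∀ n, 0 < h n)
    (p : ℕ) (m n : ℕ) :
    ((eta^[m] h) n).factorization p =
      (Phi^[m] (fun j => (h j).factorization p)) n := by
  induction m generalizing h with
  | zero => rfl
  | succ m ih =>
    rw [Function.iterate_succ_apply, Function.iterate_succ_apply, ih (eta h) (eta_pos hpos),
      factorization_eta hpos]
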